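/- arXiv:2305.18195 — 6 statements merged into one kernel-verified Lean document; each statement's English description precedes it below -/
import Mathlib

section
/- Let Q, P, N, E be matrices with P and N diagonal, satisfying the SBP property Q + Qᵀ = Eᵀ P N E. For arbitrary vectors Φ, Ψ with surface projections φ = EΦ, ψ = EΨ (underline denoting the diagonal matrix of a vector), define Q_{Φ,Ψ} = Ψ̲ Q Φ̲ + (1/2)(ψ̲E + EΨ̲)ᵀ P N (φ̲E − EΦ̲). Then Q_{Φ,Ψ} + Q_{Ψ,Φ}ᵀ = (ψ̲E)ᵀ P N (φ̲E). -/
open Matrix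

/-- Variable-coefficient SBP property with boundary penalty correction (Proposition 1). -/
theorem stmt_0 (nv ns : ℕ)
    (Q : Matrix (Fin nv) (Fin nv) ℝ) (E : Matrix (Fin ns) (Fin nv) ℝ)
    (P N : Fin ns → ℝ)
    (hSBP : Q + Qᵀ = Eᵀ * (Matrix.diagonal P * Matrix.diagonal N) * E)
    (Φ Ψ : Fin nv → ℝ) :
    (Matrix.diagonal Ψ * Q * Matrix.diagonal Φ
      + (1/2 : ℝ) • ((Matrix.diagonal (E *ᵥ Ψ) * E + E * Matrix.diagonal Ψ)ᵀ
          * (Matrix.diagonal P * Matrix.diagonal N)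
          * (Matrix.diagonal (E *ᵥ Φ) * E - E * Matrix.diagonal Φ)))
    + (Matrix.diagonal Φ * Q * Matrix.diagonal Ψ
      + (1/2 : ℝ) • ((Matrix.diagonal (E *ᵥ Φ) * E + E * Matrix.diagonal Φ)ᵀ
          * (Matrix.diagonal P * Matrix.diagonal N)
          * (Matrix.diagonal (E *ᵥ Ψ) * E - E * Matrix.diagonal Ψ)))ᵀ
    = (Matrix.diagonal (E *ᵥ Ψ) * E)ᵀ * (Matrix.diagonal P * Matrix.diagonal N)
        * (Matrix.diagonal (E *ᵥ Φ) * E) := by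
  have hA : (Matrix.diagonal P * Matrix.diagonal N)ᵀ = Matrix.diagonal P * Matrix.diagonal N := by
    simp [Matrix.diagonal_mul_diagonal, mul_comm]
  have hQ : Qᵀ = Eᵀ * (Matrix.diagonal P * Matrix.diagonal N) * E - Q := by
    rw [← hSBP]; abel
  simp only [Matrix.transpose_add, Matrix.transpose_smul, Matrix.transpose_mul,
    Matrix.transpose_transpose, Matrix.transpose_sub, Matrix.diagonal_transpose, hA, hQ]
  simp only [Matrix.mul_add, Matrix.add_mul, Matrix.mul_sub, Matrix.sub_mul,
    smul_add, smul_sub, Matrix.mul_assoc]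
  module
end

section
/- Let 𝒬_ξ, 𝒬_η satisfy the 2D reference-domain SBP properties 𝒬_ξ + 𝒬_ξᵀ = Eᵀ P̂ N_ξ E and 𝒬_η + 𝒬_ηᵀ = Eᵀ P̂ N_η E with P̂, N_ξ, N_η diagonal. Define 𝒬_x = (1/2)(𝒬_ξ Y̲_η + Y̲_η 𝒬_ξ − 𝒬_η Y̲_ξ − Y̲_ξ 𝒬_η) + (1/2)Eᵀ P̂ [N_ξ(y̲_η E − E Y̲_η) − N_η(y̲_ξ E − E Y̲_ξ)]. Then 𝒬_x + 𝒬_xᵀ = Eᵀ P̂ (N_ξ y̲_η − N_η y̲_ξ) E. Consequently, with P = j̲ P̂ and N_x = j̲⁻¹(N_ξ y̲_η − N_η y̲_ξ) for any invertible diagonal j̲, one has 𝒬_x + 𝒬_xᵀ = Eᵀ P N_x E. -/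
open Matrix

/-- Proposition 2: the curvilinear-transformed SBP operator with boundary penalty
correction satisfies the physical-domain SBP property. -/
theorem stmt_3 (nv ns : ℕ)
    (𝒬ξ 𝒬η : Matrix (Fin nv) (Fin nv) ℝ) (E : Matrix (Fin ns) (Fin nv) ℝ)
    (Ph Nξ Nη : Fin ns → ℝ)
    (hξ : 𝒬ξ + 𝒬ξᵀ = Eᵀ * (Matrix.diagonal Ph * Matrix.diagonal Nξ) * E)
    (hη : 𝒬η + 𝒬ηᵀ = Eᵀ * (Matrix.diagonal Ph * Matrix.diagonal Nη) * E)
    (Yξ Yη : Fin nv → ℝ) (yξ yη : Fin ns → ℝ)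
    (j : Fin ns → ℝ) (hj : ∀ i, j i ≠ 0)
    (𝒬x : Matrix (Fin nv) (Fin nv) ℝ)
    (h𝒬x : 𝒬x =
      (1/2 : ℝ) • (𝒬ξ * Matrix.diagonal Yη + Matrix.diagonal Yη * 𝒬ξ
        - 𝒬η * Matrix.diagonal Yξ - Matrix.diagonal Yξ * 𝒬η)
      + (1/2 : ℝ) • (Eᵀ * Matrix.diagonal Ph *
          (Matrix.diagonal Nξ * (Matrix.diagonal yη * E - E * Matrix.diagonal Yη)
           - Matrix.diagonal Nη * (Matrix.diagonal yξ * E - E * Matrix.diagonal Yξ)))) :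
    𝒬x + 𝒬xᵀ = Eᵀ * Matrix.diagonal Ph *
        (Matrix.diagonal Nξ * Matrix.diagonal yη
          - Matrix.diagonal Nη * Matrix.diagonal yξ) * E
    ∧ 𝒬x + 𝒬xᵀ = Eᵀ * (Matrix.diagonal j * Matrix.diagonal Ph) *
        (Matrix.diagonal (fun i => (j i)⁻¹) *
          (Matrix.diagonal Nξ * Matrix.diagonal yη
            - Matrix.diagonal Nη * Matrix.diagonal yξ)) * E := by
  have key : 𝒬x + 𝒬xᵀ = Eᵀ * Matrix.diagonal Ph *
      (Matrix.diagonal Nξ * Matrix.diagonal yη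
        - Matrix.diagonal Nη * Matrix.diagonal yξ) * E := by
    subst h𝒬x
    ext a b
    have h1 : 𝒬ξ a b + 𝒬ξ b a = ∑ s, E s a * (Ph s * Nξ s) * E s b := by
      have := congrFun (congrFun hξ a) b
      simpa only [Matrix.add_apply, Matrix.transpose_apply, Matrix.mul_apply,
        Matrix.diagonal_apply, mul_ite, ite_mul, mul_zero, zero_mul,
        Finset.sum_ite_eq, Finset.sum_ite_eq', Finset.mem_univ, if_true,
        Finset.sum_mul, mul_assoc] using this
    have h2 : 𝒬η a b + 𝒬η b a = ∑ s, E s a * (Ph s * Nη s) * E s b := by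
      have := congrFun (congrFun hη a) b
      simpa only [Matrix.add_apply, Matrix.transpose_apply, Matrix.mul_apply,
        Matrix.diagonal_apply, mul_ite, ite_mul, mul_zero, zero_mul,
        Finset.sum_ite_eq, Finset.sum_ite_eq', Finset.mem_univ, if_true,
        Finset.sum_mul, mul_assoc] using this
    have hsum :
        (∑ s, E s a * (Ph s * Nξ s) * E s b) * (Yη a + Yη b)
        - (∑ s, E s a * (Ph s * Nη s) * E s b) * (Yξ a + Yξ b)
        + (∑ x : Fin ns, E x a * Ph x *
            (Nξ x * (yη x * E x b - E x b * Yη b) - Nη x * (yξ x * E x b - E x b * Yξ b)))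
        + (∑ x : Fin ns, E x b * Ph x *
            (Nξ x * (yη x * E x a - E x a * Yη a) - Nη x * (yξ x * E x a - E x a * Yξ a)))
        = 2 * ∑ x : Fin ns, E x a * Ph x * (Nξ x * yη x - Nη x * yξ x) * E x b := by
      rw [Finset.sum_mul, Finset.sum_mul, Finset.mul_sum,
        ← Finset.sum_sub_distrib, ← Finset.sum_add_distrib, ← Finset.sum_add_distrib]
      exact Finset.sum_congr rfl fun s _ => by ring
    simp only [Matrix.add_apply, Matrix.sub_apply, Matrix.smul_apply, Matrix.transpose_apply,
      Matrix.mul_apply, Matrix.diagonal_apply, mul_ite, ite_mul, mul_zero, zero_mul,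
      Finset.sum_ite_eq, Finset.sum_ite_eq', Finset.mem_univ, if_true, smul_eq_mul,
      sub_zero, zero_sub, Finset.sum_sub_distrib, ite_sub_ite]
    linear_combination (1/2 : ℝ) * (Yη a + Yη b) * h1 - (1/2 : ℝ) * (Yξ a + Yξ b) * h2
      + (1/2 : ℝ) * hsum
  refine ⟨key, key.trans ?_⟩
  ext a b
  simp only [Matrix.mul_apply, Matrix.sub_apply, Matrix.transpose_apply,
    Matrix.diagonal_apply, mul_ite, ite_mul, mul_zero, zero_mul, sub_zero, zero_sub,
    Finset.sum_ite_eq, Finset.sum_ite_eq', Finset.mem_univ, if_true,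
    Finset.sum_sub_distrib, ite_sub_ite, Finset.sum_mul, Finset.mul_sum, neg_mul, mul_neg,
    Finset.sum_neg_distrib]
  refine Finset.sum_congr rfl fun s _ => ?_
  field_simp [hj s]
end

section
/- Under the assumptions: (a) 𝒬_ξ 𝟙 = 0 and 𝒬_η 𝟙 = 0; (b) E𝟙 = 𝟏 (the surface all-ones vector); (c) the metric coefficients satisfy Y_ξ = 𝒟_ξ Y, Y_η = 𝒟_η Y with 𝒟_ξ = 𝒫̂⁻¹𝒬_ξ, 𝒟_η = 𝒫̂⁻¹𝒬_η; (d) surface metrics are projections, y_ξ = E Y_ξ, y_η = E Y_η; and (e) 𝒟_ξ 𝒟_η = 𝒟_η 𝒟_ξ; then the curvilinear operator 𝒬_x = (1/2)(𝒬_ξ Y̲_η + Y̲_η 𝒬_ξ − 𝒬_η Y̲_ξ − Y̲_ξ 𝒬_η) + (1/2)Eᵀ P̂ [N_ξ(y̲_η E − E Y̲_η) − N_η(y̲_ξ E − E Y̲_ξ)] satisfies the consistency condition 𝒬_x 𝟙 = 0. -/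
open Matrix

/-- Proposition 3: consistency of the physical-domain curvilinear operator. -/
theorem stmt_4 (nv ns : ℕ)
    (𝒬ξ 𝒬η : Matrix (Fin nv) (Fin nv) ℝ) (E : Matrix (Fin ns) (Fin nv) ℝ)
    (Pc : Fin nv → ℝ) (hPc : ∀ i, 0 < Pc i)
    (Ph Nξ Nη : Fin ns → ℝ)
    (ha1 : 𝒬ξ *ᵥ (fun _ => (1 : ℝ)) = 0)
    (ha2 : 𝒬η *ᵥ (fun _ => (1 : ℝ)) = 0)
    (hb : E *ᵥ (fun _ => (1 : ℝ)) = fun _ => (1 : ℝ))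
    (Y Yξ Yη : Fin nv → ℝ)
    (hc1 : Yξ = (Matrix.diagonal (fun i => (Pc i)⁻¹) * 𝒬ξ) *ᵥ Y)
    (hc2 : Yη = (Matrix.diagonal (fun i => (Pc i)⁻¹) * 𝒬η) *ᵥ Y)
    (yξ yη : Fin ns → ℝ)
    (hd1 : yξ = E *ᵥ Yξ) (hd2 : yη = E *ᵥ Yη)
    (he : (Matrix.diagonal (fun i => (Pc i)⁻¹) * 𝒬ξ) * (Matrix.diagonal (fun i => (Pc i)⁻¹) * 𝒬η)
        = (Matrix.diagonal (fun i => (Pc i)⁻¹) * 𝒬η) * (Matrix.diagonal (fun i => (Pc i)⁻¹) * 𝒬ξ))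
    (𝒬x : Matrix (Fin nv) (Fin nv) ℝ)
    (h𝒬x : 𝒬x =
      (1/2 : ℝ) • (𝒬ξ * Matrix.diagonal Yη + Matrix.diagonal Yη * 𝒬ξ
        - 𝒬η * Matrix.diagonal Yξ - Matrix.diagonal Yξ * 𝒬η)
      + (1/2 : ℝ) • (Eᵀ * Matrix.diagonal Ph *
          (Matrix.diagonal Nξ * (Matrix.diagonal yη * E - E * Matrix.diagonal Yη)
           - Matrix.diagonal Nη * (Matrix.diagonal yξ * E - E * Matrix.diagonal Yξ)))) :
    𝒬x *ᵥ (fun _ => (1 : ℝ)) = 0 := by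
  subst h𝒬x hc1 hc2 hd1 hd2
  have cancel : ∀ x : Fin nv → ℝ,
      Matrix.diagonal Pc *ᵥ ((Matrix.diagonal fun i => (Pc i)⁻¹) *ᵥ x) = x := by
    intro x; funext i
    simp [Matrix.mulVec_diagonal, ← mul_assoc, mul_inv_cancel₀ (hPc i).ne']
  have key : 𝒬ξ *ᵥ (Matrix.diagonal fun i => (Pc i)⁻¹) *ᵥ 𝒬η *ᵥ Y
      = 𝒬η *ᵥ (Matrix.diagonal fun i => (Pc i)⁻¹) *ᵥ 𝒬ξ *ᵥ Y := by
    have h1 := congrArg (fun M => M *ᵥ Y) he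
    simp only [Matrix.mul_assoc, ← Matrix.mulVec_mulVec] at h1
    have h2 := congrArg (fun v => Matrix.diagonal Pc *ᵥ v) h1
    simpa only [cancel] using h2
  simp only [Matrix.add_mulVec, Matrix.sub_mulVec, Matrix.smul_mulVec,
    ← Matrix.mulVec_mulVec, hb]
  have hdiag : ∀ (v : Fin nv → ℝ), Matrix.diagonal v *ᵥ (fun _ => (1:ℝ)) = v := by
    intro v; funext i; simp [Matrix.mulVec_diagonal]
  have hdiagS : ∀ (v : Fin ns → ℝ), Matrix.diagonal v *ᵥ (fun _ => (1:ℝ)) = v := by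
    intro v; funext i; simp [Matrix.mulVec_diagonal]
  simp only [hdiag, hdiagS, ha1, ha2, key]
  simp
end

section
/- Let the interface coupling matrix be defined as N* = Σ_{m=1}^M Σ_{n∈𝒩_m} (1/2)(Ĩ_m)ᵀ [N_m I_{nm} + I_{nm}(−N_n)] Ĩ_n, where N_m, N_n and P_m, P_n are diagonal matrices, n ∈ 𝒩_m if and only if m ∈ 𝒩_n, and the pairwise inner product preserving condition P_n I_{mn} = (P_m I_{nm})ᵀ holds for all adjacent pairs. Then with P^i = Σ_m (Ĩ_m)ᵀ P_m Ĩ_m, the matrix P^i N* is skew-symmetric: P^i N* + (P^i N*)ᵀ = 0. -/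
open Matrix

/-- Key computation in Proposition 4: under the pairwise inner product preserving
condition, the assembled coupling term `P^i N*` is skew-symmetric. -/
theorem stmt_8 (M Ni : ℕ) (ni : Fin M → ℕ)
    (It : (m : Fin M) → Matrix (Fin (ni m)) (Fin Ni) ℝ)
    (hIt0 : ∀ m n, m ≠ n → It m * (It n)ᵀ = 0)
    (hIt1 : ∀ m, It m * (It m)ᵀ = 1)
    (P N : (m : Fin M) → Fin (ni m) → ℝ)
    (𝒩 : Fin M → Finset (Fin M))
    (hadj : ∀ m n, n ∈ 𝒩 m ↔ m ∈ 𝒩 n)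
    -- `Iop m n` is the interpolation operator `I_{nm}` from the face of Ωₙ to that of Ωₘ
    (Iop : (m n : Fin M) → Matrix (Fin (ni m)) (Fin (ni n)) ℝ)
    (hIPP : ∀ m, ∀ n ∈ 𝒩 m,
      Matrix.diagonal (P n) * Iop n m = (Matrix.diagonal (P m) * Iop m n)ᵀ)
    (Pi Nstar : Matrix (Fin Ni) (Fin Ni) ℝ)
    (hPi : Pi = ∑ m, (It m)ᵀ * Matrix.diagonal (P m) * It m)
    (hNstar : Nstar = ∑ m, ∑ n ∈ 𝒩 m, (1/2 : ℝ) •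
        ((It m)ᵀ * (Matrix.diagonal (N m) * Iop m n + Iop m n * (-Matrix.diagonal (N n)))
          * It n)) :
    Pi * Nstar + (Pi * Nstar)ᵀ = 0 := by
  set D : (m : Fin M) → Matrix (Fin (ni m)) (Fin (ni m)) ℝ :=
    fun m => Matrix.diagonal (P m) with hD
  set E : (m : Fin M) → Matrix (Fin (ni m)) (Fin (ni m)) ℝ :=
    fun m => Matrix.diagonal (N m) with hE
  -- projection lemma
  have hproj : ∀ m (X : Matrix (Fin (ni m)) (Fin Ni) ℝ),
      Pi * ((It m)ᵀ * X) = (It m)ᵀ * (D m * X) := by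
    intro m X
    rw [hPi, Finset.sum_mul]
    rw [Finset.sum_eq_single m]
    · rw [Matrix.mul_assoc, ← Matrix.mul_assoc (It m), hIt1 m, Matrix.one_mul,
        Matrix.mul_assoc]
    · intro k _ hk
      rw [Matrix.mul_assoc, ← Matrix.mul_assoc (It k), hIt0 k m hk,
        Matrix.zero_mul, Matrix.mul_zero]
    · intro h; exact absurd (Finset.mem_univ m) h
  -- the collapsed form of `Pi * Nstar`
  have key : Pi * Nstar = ∑ m, ∑ n ∈ 𝒩 m, (1/2 : ℝ) •
      ((It m)ᵀ * (D m * (E m * Iop m n + Iop m n * (-E n))) * It n) := by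
    rw [hNstar, Finset.mul_sum]
    refine Finset.sum_congr rfl fun m _ => ?_
    rw [Finset.mul_sum]
    refine Finset.sum_congr rfl fun n _ => ?_
    rw [Matrix.mul_smul]
    congr 1
    rw [Matrix.mul_assoc ((It m)ᵀ), hproj m]
    simp only [hD, hE, Matrix.mul_assoc]
  -- key IPP consequence: (Iop m n)ᵀ * D m = D n * Iop n m
  have hIPP' : ∀ m, ∀ n ∈ 𝒩 m, (Iop m n)ᵀ * D m = D n * Iop n m := by
    intro m n hn
    rw [hIPP m n hn, Matrix.transpose_mul, Matrix.diagonal_transpose]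
  -- diagonal matrices commute
  have hcomm : ∀ m, E m * D m = D m * E m := by
    intro m
    simp only [hD, hE, Matrix.diagonal_mul_diagonal, mul_comm]
  -- termwise skew relation
  have hterm : ∀ m, ∀ n ∈ 𝒩 m,
      ((It m)ᵀ * (D m * (E m * Iop m n + Iop m n * (-E n))) * It n)ᵀ =
      -((It n)ᵀ * (D n * (E n * Iop n m + Iop n m * (-E m))) * It m) := by
    intro m n hn
    have hDmT : (D m)ᵀ = D m := by simp [hD]
    have hEnT : (E n)ᵀ = E n := by simp [hE]
    have hEmT : (E m)ᵀ = E m := by simp [hE]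
    have hmain : (D m * (E m * Iop m n + Iop m n * -E n))ᵀ =
        -(D n * (E n * Iop n m + Iop n m * -E m)) := by
      rw [Matrix.transpose_mul, hDmT, Matrix.transpose_add, Matrix.transpose_mul,
        Matrix.transpose_mul, hEmT, Matrix.transpose_neg, hEnT, Matrix.add_mul]
      have h1 : (Iop m n)ᵀ * E m * D m = D n * Iop n m * E m := by
        rw [Matrix.mul_assoc, hcomm m, ← Matrix.mul_assoc, hIPP' m n hn]
      have h2 : -E n * (Iop m n)ᵀ * D m = -(D n * E n * Iop n m) := by
        rw [Matrix.neg_mul, Matrix.neg_mul, Matrix.mul_assoc, hIPP' m n hn,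
          ← Matrix.mul_assoc, hcomm n]
      rw [h1, h2]
      simp only [Matrix.mul_add, Matrix.mul_neg, Matrix.neg_mul, Matrix.mul_assoc]
      abel
    rw [Matrix.transpose_mul, Matrix.transpose_mul, Matrix.transpose_transpose, hmain]
    simp [Matrix.mul_neg, Matrix.neg_mul, Matrix.mul_assoc]
  -- now finish
  rw [key, Matrix.transpose_sum]
  have hT : ∀ m, (∑ n ∈ 𝒩 m, (1/2 : ℝ) •
      ((It m)ᵀ * (D m * (E m * Iop m n + Iop m n * (-E n))) * It n))ᵀ =
      ∑ n ∈ 𝒩 m, -((1/2 : ℝ) •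
      ((It n)ᵀ * (D n * (E n * Iop n m + Iop n m * (-E m))) * It m)) := by
    intro m
    rw [Matrix.transpose_sum]
    refine Finset.sum_congr rfl fun n hn => ?_
    rw [Matrix.transpose_smul, hterm m n hn, smul_neg]
  simp only [hT]
  rw [Finset.sum_comm' (t' := Finset.univ) (s' := 𝒩)
    (f := fun m n => -((1/2 : ℝ) •
      ((It n)ᵀ * (D n * (E n * Iop n m + Iop n m * (-E m))) * It m)))
    (fun m n => by simpa using hadj m n)]
  rw [← Finset.sum_add_distrib]
  refine Finset.sum_eq_zero fun m _ => ?_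
  rw [← Finset.sum_add_distrib]
  refine Finset.sum_eq_zero fun n _ => ?_
  exact add_neg_cancel _
end

section
/- Under the hypotheses of the previous statement (pairwise IPP condition P_n I_{mn} = (P_m I_{nm})ᵀ, symmetric adjacency, diagonal P_m and N_m), the global operator 𝒬 = Q̄ − (1/2)(E^i)ᵀ P^i (N^i − N*) E^i satisfies the encapsulated SBP property 𝒬 + 𝒬ᵀ = (E^e)ᵀ P^e N^e E^e, given that Q̄ + Q̄ᵀ = (E^e)ᵀ P^e N^e E^e + (E^i)ᵀ P^i N^i E^i. -/
open Matrix

lemma absorb_aux {M Ni k : ℕ} {ni : Fin M → ℕ}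
    (It : (m : Fin M) → Matrix (Fin (ni m)) (Fin Ni) ℝ)
    (hIt0 : ∀ m n, m ≠ n → It m * (It n)ᵀ = 0)
    (hIt1 : ∀ m, It m * (It m)ᵀ = 1)
    (P : (m : Fin M) → Fin (ni m) → ℝ)
    (n : Fin M) (B : Matrix (Fin (ni n)) (Fin k) ℝ) :
    (∑ m, (It m)ᵀ * Matrix.diagonal (P m) * It m) * ((It n)ᵀ * B)
      = (It n)ᵀ * Matrix.diagonal (P n) * B := by
  rw [Matrix.sum_mul, Finset.sum_eq_single n]
  · rw [Matrix.mul_assoc ((It n)ᵀ * Matrix.diagonal (P n)) (It n) _,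
      ← Matrix.mul_assoc (It n) (It n)ᵀ B, hIt1, Matrix.one_mul]
  · intro m _ hmn
    rw [Matrix.mul_assoc ((It m)ᵀ * Matrix.diagonal (P m)) (It m) _,
      ← Matrix.mul_assoc (It m) (It n)ᵀ B, hIt0 m n hmn, Matrix.zero_mul,
      Matrix.mul_zero]
  · simp

lemma term_aux {M Ni : ℕ} {ni : Fin M → ℕ}
    (It : (m : Fin M) → Matrix (Fin (ni m)) (Fin Ni) ℝ)
    (P N : (m : Fin M) → Fin (ni m) → ℝ)
    (m n : Fin M)
    (Imn : Matrix (Fin (ni m)) (Fin (ni n)) ℝ)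
    (Inm : Matrix (Fin (ni n)) (Fin (ni m)) ℝ)
    (h1 : Matrix.diagonal (P n) * Inm = (Matrix.diagonal (P m) * Imn)ᵀ) :
    (It m)ᵀ * Matrix.diagonal (P m)
        * ((Matrix.diagonal (N m) * Imn + Imn * (-Matrix.diagonal (N n))) * It n)
      + ((It n)ᵀ * Matrix.diagonal (P n)
        * ((Matrix.diagonal (N n) * Inm + Inm * (-Matrix.diagonal (N m))) * It m))ᵀ
      = 0 := by
  have hkey : Inmᵀ * Matrix.diagonal (P n) = Matrix.diagonal (P m) * Imn := by
    have := congrArg Matrix.transpose h1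
    simpa [Matrix.transpose_mul] using this
  have hcomm : ∀ (k : Fin M) (a b : Fin (ni k) → ℝ),
      Matrix.diagonal a * Matrix.diagonal b = Matrix.diagonal b * Matrix.diagonal a := by
    intro k a b
    rw [Matrix.diagonal_mul_diagonal, Matrix.diagonal_mul_diagonal]
    ext i j
    simp [Matrix.diagonal_apply, mul_comm]
  have hmid : Matrix.diagonal (P m)
        * (Matrix.diagonal (N m) * Imn + Imn * (-Matrix.diagonal (N n)))
      + (Matrix.diagonal (N n) * Inm + Inm * (-Matrix.diagonal (N m)))ᵀ
          * Matrix.diagonal (P n) = 0 := by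
    have e1 : Inmᵀ * Matrix.diagonal (N n) * Matrix.diagonal (P n)
        = Matrix.diagonal (P m) * Imn * Matrix.diagonal (N n) := by
      rw [Matrix.mul_assoc, hcomm, ← Matrix.mul_assoc, hkey]
    have e2 : Matrix.diagonal (N m) * Inmᵀ * Matrix.diagonal (P n)
        = Matrix.diagonal (P m) * Matrix.diagonal (N m) * Imn := by
      rw [Matrix.mul_assoc, hkey, ← Matrix.mul_assoc, hcomm]
    simp only [Matrix.transpose_add, Matrix.transpose_mul, Matrix.transpose_neg,
      Matrix.diagonal_transpose, Matrix.add_mul, Matrix.neg_mul, Matrix.mul_neg,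
      Matrix.mul_add]
    rw [e1, ← Matrix.mul_assoc, e2]
    simp only [Matrix.mul_assoc]
    abel
  calc (It m)ᵀ * Matrix.diagonal (P m)
        * ((Matrix.diagonal (N m) * Imn + Imn * (-Matrix.diagonal (N n))) * It n)
      + ((It n)ᵀ * Matrix.diagonal (P n)
        * ((Matrix.diagonal (N n) * Inm + Inm * (-Matrix.diagonal (N m))) * It m))ᵀ
      = (It m)ᵀ * ((Matrix.diagonal (P m)
            * (Matrix.diagonal (N m) * Imn + Imn * (-Matrix.diagonal (N n)))
          + (Matrix.diagonal (N n) * Inm + Inm * (-Matrix.diagonal (N m)))ᵀ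
            * Matrix.diagonal (P n)) * It n) := by
        simp only [Matrix.transpose_add, Matrix.transpose_mul, Matrix.transpose_neg,
          Matrix.transpose_transpose, Matrix.diagonal_transpose, Matrix.add_mul,
          Matrix.mul_add, Matrix.neg_mul, Matrix.mul_neg, Matrix.mul_assoc]
    _ = 0 := by rw [hmid, Matrix.zero_mul, Matrix.mul_zero]

/-- Proposition 4: the global multi-block operator with IPP interface coupling
satisfies the encapsulated SBP property. -/
theorem stmt_9 (M Nv Ne Ni : ℕ) (ni : Fin M → ℕ)
    (It : (m : Fin M) → Matrix (Fin (ni m)) (Fin Ni) ℝ)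
    (hIt0 : ∀ m n, m ≠ n → It m * (It n)ᵀ = 0)
    (hIt1 : ∀ m, It m * (It m)ᵀ = 1)
    (P N : (m : Fin M) → Fin (ni m) → ℝ)
    (𝒩 : Fin M → Finset (Fin M))
    (hadj : ∀ m n, n ∈ 𝒩 m ↔ m ∈ 𝒩 n)
    (Iop : (m n : Fin M) → Matrix (Fin (ni m)) (Fin (ni n)) ℝ)
    (hIPP : ∀ m, ∀ n ∈ 𝒩 m,
      Matrix.diagonal (P n) * Iop n m = (Matrix.diagonal (P m) * Iop m n)ᵀ)
    (Pi Ni' Nstar : Matrix (Fin Ni) (Fin Ni) ℝ)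
    (hPi : Pi = ∑ m, (It m)ᵀ * Matrix.diagonal (P m) * It m)
    (hNi : Ni' = ∑ m, (It m)ᵀ * Matrix.diagonal (N m) * It m)
    (hNstar : Nstar = ∑ m, ∑ n ∈ 𝒩 m, (1/2 : ℝ) •
        ((It m)ᵀ * (Matrix.diagonal (N m) * Iop m n + Iop m n * (-Matrix.diagonal (N n)))
          * It n))
    (Qbar : Matrix (Fin Nv) (Fin Nv) ℝ)
    (Ee : Matrix (Fin Ne) (Fin Nv) ℝ) (Ei : Matrix (Fin Ni) (Fin Nv) ℝ)
    (Pe Nrme : Fin Ne → ℝ)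
    (hglob : Qbar + Qbarᵀ
      = Eeᵀ * (Matrix.diagonal Pe * Matrix.diagonal Nrme) * Ee + Eiᵀ * (Pi * Ni') * Ei)
    (𝒬 : Matrix (Fin Nv) (Fin Nv) ℝ)
    (h𝒬 : 𝒬 = Qbar - (1/2 : ℝ) • (Eiᵀ * (Pi * (Ni' - Nstar)) * Ei)) :
    𝒬 + 𝒬ᵀ = Eeᵀ * (Matrix.diagonal Pe * Matrix.diagonal Nrme) * Ee := by
  have habs : ∀ (k : ℕ) (n : Fin M) (B : Matrix (Fin (ni n)) (Fin k) ℝ),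
      Pi * ((It n)ᵀ * B) = (It n)ᵀ * Matrix.diagonal (P n) * B := by
    intro k n B
    rw [hPi]
    exact absorb_aux It hIt0 hIt1 P n B
  have hcomm : ∀ (k : Fin M) (a b : Fin (ni k) → ℝ),
      Matrix.diagonal a * Matrix.diagonal b = Matrix.diagonal b * Matrix.diagonal a := by
    intro k a b
    rw [Matrix.diagonal_mul_diagonal, Matrix.diagonal_mul_diagonal]
    ext i j
    simp [Matrix.diagonal_apply, mul_comm]
  have hNiSum : Pi * Ni'
      = ∑ m, (It m)ᵀ * Matrix.diagonal (P m) * (Matrix.diagonal (N m) * It m) := by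
    rw [hNi, Matrix.mul_sum]
    refine Finset.sum_congr rfl fun m _ => ?_
    rw [Matrix.mul_assoc ((It m)ᵀ) (Matrix.diagonal (N m)) (It m), habs]
  have hsymm : (Pi * Ni')ᵀ = Pi * Ni' := by
    rw [hNiSum, Matrix.transpose_sum]
    refine Finset.sum_congr rfl fun m _ => ?_
    simp only [Matrix.transpose_mul, Matrix.transpose_transpose,
      Matrix.diagonal_transpose, Matrix.mul_assoc]
    rw [← Matrix.mul_assoc (Matrix.diagonal (N m)), hcomm, Matrix.mul_assoc]
  have hNstarSum : Pi * Nstar = ∑ m, ∑ n ∈ 𝒩 m, (1/2 : ℝ) •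
      ((It m)ᵀ * Matrix.diagonal (P m) *
        ((Matrix.diagonal (N m) * Iop m n + Iop m n * (-Matrix.diagonal (N n))) * It n)) := by
    rw [hNstar, Matrix.mul_sum]
    refine Finset.sum_congr rfl fun m _ => ?_
    rw [Matrix.mul_sum]
    refine Finset.sum_congr rfl fun n _ => ?_
    rw [Matrix.mul_smul, Matrix.mul_assoc ((It m)ᵀ) _ (It n), habs]
  have hTsum : (Pi * Nstar)ᵀ = ∑ m, ∑ n ∈ 𝒩 m, (1/2 : ℝ) •
      (((It n)ᵀ * Matrix.diagonal (P n) *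
        ((Matrix.diagonal (N n) * Iop n m + Iop n m * (-Matrix.diagonal (N m))) * It m))ᵀ) := by
    rw [hNstarSum, Matrix.transpose_sum]
    simp only [Matrix.transpose_sum, Matrix.transpose_smul]
    exact Finset.sum_comm' (fun x y => by simp [hadj x y])
  have hzero : Pi * Nstar + (Pi * Nstar)ᵀ = 0 := by
    rw [hTsum, hNstarSum, ← Finset.sum_add_distrib]
    refine Finset.sum_eq_zero fun m _ => ?_
    rw [← Finset.sum_add_distrib]
    refine Finset.sum_eq_zero fun n hn => ?_
    rw [← smul_add, term_aux It P N m n (Iop m n) (Iop n m) (hIPP m n hn), smul_zero]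
  have hA : Pi * (Ni' - Nstar) + (Pi * (Ni' - Nstar))ᵀ = (2 : ℝ) • (Pi * Ni') := by
    rw [Matrix.mul_sub, Matrix.transpose_sub, hsymm,
      eq_neg_of_add_eq_zero_right hzero, two_smul]
    abel
  have hEB : Eiᵀ * (Pi * (Ni' - Nstar)) * Ei + (Eiᵀ * (Pi * (Ni' - Nstar)) * Ei)ᵀ
      = (2 : ℝ) • (Eiᵀ * (Pi * Ni') * Ei) := by
    calc Eiᵀ * (Pi * (Ni' - Nstar)) * Ei + (Eiᵀ * (Pi * (Ni' - Nstar)) * Ei)ᵀ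
        = Eiᵀ * ((Pi * (Ni' - Nstar) + (Pi * (Ni' - Nstar))ᵀ) * Ei) := by
          simp [Matrix.transpose_mul, Matrix.add_mul, Matrix.mul_add, Matrix.mul_assoc]
      _ = (2 : ℝ) • (Eiᵀ * (Pi * Ni') * Ei) := by
          rw [hA]
          simp [Matrix.smul_mul, Matrix.mul_smul, Matrix.mul_assoc]
  rw [h𝒬]
  have expand : Qbar - (1/2 : ℝ) • (Eiᵀ * (Pi * (Ni' - Nstar)) * Ei)
      + (Qbar - (1/2 : ℝ) • (Eiᵀ * (Pi * (Ni' - Nstar)) * Ei))ᵀ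
      = Qbar + Qbarᵀ - (1/2 : ℝ) • (Eiᵀ * (Pi * (Ni' - Nstar)) * Ei
          + (Eiᵀ * (Pi * (Ni' - Nstar)) * Ei)ᵀ) := by
    rw [Matrix.transpose_sub, Matrix.transpose_smul, smul_add]
    abel
  rw [expand, hEB, smul_smul, hglob]
  norm_num
end

section
/- Under assumptions 𝒬_ξ𝟙 = 0, 𝒬_η𝟙 = 0, Y_ξ = 𝒫̂⁻¹𝒬_ξ Y and Y_η = 𝒫̂⁻¹𝒬_η Y, the naive curvilinear operator 𝒬̃_x = (1/2)(𝒬_ξ Y̲_η + Y̲_η 𝒬_ξ − 𝒬_η Y̲_ξ − Y̲_ξ 𝒬_η) satisfies 𝒬̃_x 𝟙 = (1/2) 𝒫̂ (𝒟_ξ 𝒟_η − 𝒟_η 𝒟_ξ) Y, where 𝒟_ξ = 𝒫̂⁻¹𝒬_ξ and 𝒟_η = 𝒫̂⁻¹𝒬_η. In particular, 𝒬̃_x 𝟙 = 0 whenever 𝒟_ξ and 𝒟_η commute. -/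
open Matrix

/-- Core computation in the proof of Proposition 3: the naive curvilinear
operator applied to the all-ones vector gives the commutator expression. -/
theorem stmt_18 (nv : ℕ)
    (𝒬ξ 𝒬η : Matrix (Fin nv) (Fin nv) ℝ)
    (Pc : Fin nv → ℝ) (hPc : ∀ i, Pc i ≠ 0)
    (hξ : 𝒬ξ *ᵥ (fun _ => (1 : ℝ)) = 0)
    (hη : 𝒬η *ᵥ (fun _ => (1 : ℝ)) = 0)
    (Y Yξ Yη : Fin nv → ℝ)
    (hYξ : Yξ = (Matrix.diagonal (fun i => (Pc i)⁻¹) * 𝒬ξ) *ᵥ Y)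
    (hYη : Yη = (Matrix.diagonal (fun i => (Pc i)⁻¹) * 𝒬η) *ᵥ Y)
    (Qtx : Matrix (Fin nv) (Fin nv) ℝ)
    (hQtx : Qtx = (1/2 : ℝ) • (𝒬ξ * Matrix.diagonal Yη + Matrix.diagonal Yη * 𝒬ξ
        - 𝒬η * Matrix.diagonal Yξ - Matrix.diagonal Yξ * 𝒬η)) :
    Qtx *ᵥ (fun _ => (1 : ℝ))
      = (1/2 : ℝ) • ((Matrix.diagonal Pc *
          ((Matrix.diagonal (fun i => (Pc i)⁻¹) * 𝒬ξ) * (Matrix.diagonal (fun i => (Pc i)⁻¹) * 𝒬η)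
           - (Matrix.diagonal (fun i => (Pc i)⁻¹) * 𝒬η) * (Matrix.diagonal (fun i => (Pc i)⁻¹) * 𝒬ξ))) *ᵥ Y)
    ∧ ((Matrix.diagonal (fun i => (Pc i)⁻¹) * 𝒬ξ) * (Matrix.diagonal (fun i => (Pc i)⁻¹) * 𝒬η)
        = (Matrix.diagonal (fun i => (Pc i)⁻¹) * 𝒬η) * (Matrix.diagonal (fun i => (Pc i)⁻¹) * 𝒬ξ)
        → Qtx *ᵥ (fun _ => (1 : ℝ)) = 0) := by

  set Dξ := Matrix.diagonal (fun i => (Pc i)⁻¹) * 𝒬ξ with hDξ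
  set Dη := Matrix.diagonal (fun i => (Pc i)⁻¹) * 𝒬η with hDη
  have hP : Matrix.diagonal Pc * Matrix.diagonal (fun i => (Pc i)⁻¹) = 1 := by
    rw [Matrix.diagonal_mul_diagonal]
    have : (fun i => Pc i * (Pc i)⁻¹) = fun _ => (1:ℝ) := by
      funext i; exact mul_inv_cancel₀ (hPc i)
    rw [this, Matrix.diagonal_one]
  have hPξ : Matrix.diagonal Pc * Dξ = 𝒬ξ := by
    rw [hDξ, ← Matrix.mul_assoc, hP, Matrix.one_mul]
  have hPη : Matrix.diagonal Pc * Dη = 𝒬η := by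
    rw [hDη, ← Matrix.mul_assoc, hP, Matrix.one_mul]
  have hdiagη : Matrix.diagonal Yη *ᵥ (fun _ => (1:ℝ)) = Yη := by
    funext i; simp [Matrix.mulVec_diagonal]
  have hdiagξ : Matrix.diagonal Yξ *ᵥ (fun _ => (1:ℝ)) = Yξ := by
    funext i; simp [Matrix.mulVec_diagonal]
  have key : Qtx *ᵥ (fun _ => (1:ℝ))
      = (1/2 : ℝ) • ((Matrix.diagonal Pc * (Dξ * Dη - Dη * Dξ)) *ᵥ Y) := by
    rw [hQtx, Matrix.smul_mulVec]
    congr 1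
    rw [Matrix.sub_mulVec, Matrix.sub_mulVec, Matrix.add_mulVec,
      ← Matrix.mulVec_mulVec, ← Matrix.mulVec_mulVec, ← Matrix.mulVec_mulVec,
      ← Matrix.mulVec_mulVec, hdiagη, hdiagξ, hξ, hη]
    have h1 : 𝒬ξ *ᵥ Yη = (Matrix.diagonal Pc * (Dξ * Dη)) *ᵥ Y := by
      rw [← Matrix.mul_assoc, hPξ, hYη, Matrix.mulVec_mulVec]
    have h2 : 𝒬η *ᵥ Yξ = (Matrix.diagonal Pc * (Dη * Dξ)) *ᵥ Y := by
      rw [← Matrix.mul_assoc, hPη, hYξ, Matrix.mulVec_mulVec]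
    rw [Matrix.mul_sub, Matrix.sub_mulVec, ← h1, ← h2]
    simp
  refine ⟨key, fun hcomm => ?_⟩
  rw [key, hcomm]
  simp
end
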